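/- Fix k = 3, n ≥ 2, ρ ∈ (0,1). Let {C_p}_{p=1}^3 ⊂ ℝ² be a simplicial conical partition and set B_p := C_p × ℝ^{n-2} for each p. Fix i, j ∈ {1,2,3} with i ≠ j, and assume B_i ∩ B_j ⊆ {x ∈ ℝⁿ : x_1 = 0}, B_i ⊆ {x ∈ ℝⁿ : x_1 ≥ 0}, and B_j is the image of B_i under the reflection x ↦ (-x_1, x_2, …, x_n). Then for every x ∈ B_i with x_1 > √n √(1-ρ²)/ρ, ∫_{ℝⁿ} (Σ_{ℓ=1}^n (1 - y_ℓ²)) (1_{B_i} - 1_{B_j})(xρ + y√(1-ρ²)) dγ_n(y) ≥ 0. -/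

import Mathlib

open MeasureTheory

/-- The standard Gaussian probability measure `γₙ` on `ℝⁿ`. -/
noncomputable def gauss (n : ℕ) : Measure (EuclideanSpace ℝ (Fin n)) :=
  volume.withDensity
    (fun y => ENNReal.ofReal ((2 * Real.pi) ^ (-(n : ℝ) / 2) * Real.exp (-‖y‖ ^ 2 / 2)))

/-- A simplicial conical partition: the Voronoi cells of nonzero vectors `z₁,…,z_k`. -/
def IsSimplicialConicalPartition (n k : ℕ)
    (A : Fin k → Set (EuclideanSpace ℝ (Fin n))) : Prop :=
  ∃ z : Fin k → EuclideanSpace ℝ (Fin n), (∀ i, z i ≠ 0) ∧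
    ∀ i, A i = {x | ∀ j, (inner ℝ x (z j) : ℝ) ≤ (inner ℝ x (z i) : ℝ)}

/-- Projection of `ℝⁿ` onto the first two coordinates. -/
def proj2 (n : ℕ) (h : 2 ≤ n) (x : EuclideanSpace ℝ (Fin n)) :
    EuclideanSpace ℝ (Fin 2) :=
  WithLp.toLp 2 (fun i => x (Fin.castLE h i))

/-- Reflection of `ℝⁿ` in the first coordinate, `x ↦ (-x₁, x₂, …, xₙ)`. -/
def reflFirst (n : ℕ) (h : 2 ≤ n) (x : EuclideanSpace ℝ (Fin n)) :
    EuclideanSpace ℝ (Fin n) :=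
  WithLp.toLp 2 (Function.update x.ofLp (Fin.castLE h 0) (-(x (Fin.castLE h 0))))

/-!
Write `z y = ρ • x + √(1 - ρ²) • y`, `G = z⁻¹' B_i`, `H = z⁻¹' B_j` and
`w y = (n - ‖y‖²) e^{-‖y‖²/2}`; up to the Gaussian constant the integral is `∫_G w - ∫_H w`.
Since `B_j` is the mirror image of `B_i ⊆ {x₁ ≥ 0}`, every `y ∈ H` has `y₁ < -√n` once `x₁` is
large, so `w < 0` on `H`. Since `B_i` is a convex cone containing `ρ • x`, `G` is star-shaped
about `0`, and then `∫_G w ≥ 0`: `∫_G w` is the derivative at `r = 1` of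
`r ↦ ∫_G rⁿ e^{-r²‖y‖²/2} dy = ∫_{r • G} e^{-‖v‖²/2} dv`, which is monotone because the dilates
`r • G` increase with `r`.
-/

open Set Filter Real Module
open scoped Topology Pointwise

lemma mul_exp_neg_mul_le {b : ℝ} (hb : 0 < b) (t : ℝ) :
    t * exp (-b * t) ≤ 2 / b * exp (-(b / 2) * t) := by
  have hlin : t ≤ 2 / b * exp (b / 2 * t) := by
    rw [div_mul_eq_mul_div, le_div_iff₀ hb]
    nlinarith [add_one_le_exp (b / 2 * t)]
  calc t * exp (-b * t) = t * exp (-(b / 2) * t) * exp (-(b / 2) * t) := by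
        rw [mul_assoc, ← exp_add]; ring_nf
    _ ≤ 2 / b * exp (b / 2 * t) * exp (-(b / 2) * t) * exp (-(b / 2) * t) := by gcongr
    _ = 2 / b * exp (-(b / 2) * t) := by
        rw [mul_assoc (2 / b), ← exp_add]; ring_nf; simp

lemma hasDerivAt_pow_mul_exp_neg_sq_mul (d : ℕ) (t r : ℝ) :
    HasDerivAt (fun r => r ^ d * exp (-(r ^ 2 * t) / 2))
      ((d * r ^ (d - 1) - r ^ (d + 1) * t) * exp (-(r ^ 2 * t) / 2)) r := by
  have hexp : HasDerivAt (fun r => exp (-(r ^ 2 * t) / 2))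
      (exp (-(r ^ 2 * t) / 2) * (-(2 * r * t) / 2)) r := by
    simpa using (((hasDerivAt_pow 2 r).mul_const t).neg.div_const 2).exp
  refine ((hasDerivAt_pow d r).mul hexp).congr_deriv ?_
  rcases d with _ | d
  · simp only [CharP.cast_eq_zero, zero_mul, zero_add, pow_zero, pow_one]
    ring
  · simp only [Nat.cast_add, Nat.cast_one, Nat.add_sub_cancel, pow_succ]
    ring

lemma abs_deriv_pow_mul_exp_neg_sq_mul_le (d : ℕ) {t r : ℝ} (ht : 0 ≤ t)
    (hr : r ∈ Ioo (1 / 2 : ℝ) 2) :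
    |(d * r ^ (d - 1) - r ^ (d + 1) * t) * exp (-(r ^ 2 * t) / 2)|
      ≤ (d * 2 ^ d + 2 ^ (d + 1) * t) * exp (-(1 / 8) * t) := by
  obtain ⟨hr₁, hr₂⟩ := hr
  have hr₀ : 0 ≤ r := by linarith
  have hpow : r ^ (d - 1) ≤ 2 ^ d :=
    (pow_le_pow_left₀ hr₀ hr₂.le _).trans (pow_le_pow_right₀ one_le_two (Nat.sub_le d 1))
  have hpow' : r ^ (d + 1) ≤ 2 ^ (d + 1) := pow_le_pow_left₀ hr₀ hr₂.le _
  have hexp : exp (-(r ^ 2 * t) / 2) ≤ exp (-(1 / 8) * t) := by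
    have hr2 : 1 / 4 ≤ r ^ 2 := by nlinarith
    gcongr
    nlinarith [mul_le_mul_of_nonneg_right hr2 ht]
  rw [abs_mul, abs_of_pos (exp_pos _)]
  gcongr
  rw [abs_le]
  constructor <;> nlinarith [pow_nonneg hr₀ (d - 1), pow_nonneg hr₀ (d + 1)]

section

variable {E : Type*} [NormedAddCommGroup E] [InnerProductSpace ℝ E] [FiniteDimensional ℝ E]
  [MeasurableSpace E] [BorelSpace E]

lemma integrable_exp_neg_mul_sq_norm {b : ℝ} (hb : 0 < b) :
    Integrable (fun v : E => exp (-b * ‖v‖ ^ 2)) := by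
  refine (GaussianFourier.integrable_cexp_neg_mul_sq_norm_add (V := E) (b := b)
    (by simpa) 0 0).norm.congr (.of_forall fun v => ?_)
  simp [Complex.norm_exp, ← Complex.ofReal_pow]

lemma integrable_sq_norm_mul_exp_neg_mul_sq_norm {b : ℝ} (hb : 0 < b) :
    Integrable (fun v : E => ‖v‖ ^ 2 * exp (-b * ‖v‖ ^ 2)) := by
  refine ((integrable_exp_neg_mul_sq_norm (half_pos hb)).const_mul (2 / b)).mono'
    (by fun_prop) (.of_forall fun v => ?_)
  rw [Real.norm_of_nonneg (by positivity)]
  exact mul_exp_neg_mul_le hb _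

lemma integrable_const_sub_sq_norm_mul_exp (a : ℝ) :
    Integrable (fun v : E => (a - ‖v‖ ^ 2) * exp (-‖v‖ ^ 2 / 2)) := by
  have h := ((integrable_exp_neg_mul_sq_norm (E := E) one_half_pos).const_mul a).sub
    (integrable_sq_norm_mul_exp_neg_mul_sq_norm (E := E) one_half_pos)
  refine h.congr (.of_forall fun v => ?_)
  simp only [Pi.sub_apply]
  ring_nf

lemma hasDerivAt_setIntegral_pow_mul_exp_neg_sq_mul_sq_norm (G : Set E) :
    HasDerivAt (fun r => ∫ y in G, r ^ finrank ℝ E * exp (-(r ^ 2 * ‖y‖ ^ 2) / 2))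
      (∫ y in G, (finrank ℝ E - ‖y‖ ^ 2) * exp (-‖y‖ ^ 2 / 2)) 1 := by
  set d := finrank ℝ E
  have hbound : Integrable (fun y : E => (d * 2 ^ d + 2 ^ (d + 1) * ‖y‖ ^ 2)
      * exp (-(1 / 8) * ‖y‖ ^ 2)) := by
    have h₈ : (0 : ℝ) < 1 / 8 := by norm_num
    exact (((integrable_exp_neg_mul_sq_norm h₈).const_mul ((d : ℝ) * 2 ^ d)).add
      ((integrable_sq_norm_mul_exp_neg_mul_sq_norm h₈).const_mul ((2 : ℝ) ^ (d + 1)))).congr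
        (.of_forall fun y => by simp only [Pi.add_apply]; ring)
  have hint : Integrable (fun y : E => (1 : ℝ) ^ d * exp (-((1 : ℝ) ^ 2 * ‖y‖ ^ 2) / 2)) :=
    (integrable_exp_neg_mul_sq_norm one_half_pos).congr
      (.of_forall fun y => by simp only [one_pow, one_mul]; ring_nf)
  have h := hasDerivAt_integral_of_dominated_loc_of_deriv_le (μ := volume.restrict G)
    (F := fun r y => r ^ d * exp (-(r ^ 2 * ‖y‖ ^ 2) / 2))
    (F' := fun r y => (d * r ^ (d - 1) - r ^ (d + 1) * ‖y‖ ^ 2) * exp (-(r ^ 2 * ‖y‖ ^ 2) / 2))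
    (x₀ := (1 : ℝ)) (Ioo_mem_nhds (by norm_num : (1 / 2 : ℝ) < 1) one_lt_two)
    (.of_forall fun r => by fun_prop) hint.integrableOn (by fun_prop)
    (.of_forall fun y r hr => ?_) hbound.integrableOn
    (.of_forall fun y r _ => hasDerivAt_pow_mul_exp_neg_sq_mul d (‖y‖ ^ 2) r)
  · simpa using h.2
  · rw [Real.norm_eq_abs]
    exact abs_deriv_pow_mul_exp_neg_sq_mul_le d (by positivity) hr

lemma setIntegral_pow_mul_exp_neg_sq_mul_sq_norm_eq_setIntegral_smul {r : ℝ} (hr : 0 < r) (G : Set E) :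
    ∫ y in G, r ^ finrank ℝ E * exp (-(r ^ 2 * ‖y‖ ^ 2) / 2)
      = ∫ v in r • G, exp (-‖v‖ ^ 2 / 2) := by
  have h := Measure.setIntegral_comp_smul_of_pos volume (fun v : E => exp (-‖v‖ ^ 2 / 2)) G hr
  simp only [norm_smul, mul_pow, Real.norm_of_nonneg hr.le, smul_eq_mul] at h
  rw [integral_const_mul, h, ← mul_assoc, mul_inv_cancel₀ (by positivity), one_mul]

lemma StarConvex.monotoneOn_setIntegral_smul {G : Set E} (hG : StarConvex ℝ 0 G) {f : E → ℝ}
    (hf : Integrable f) (hf₀ : 0 ≤ f) : MonotoneOn (fun r : ℝ => ∫ v in r • G, f v) (Ioi 0) := by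
  intro r (hr : 0 < r) r' (hr' : 0 < r') hrr'
  refine setIntegral_mono_set hf.integrableOn (.of_forall hf₀) (.of_forall ?_)
  rintro _ ⟨y, hy, rfl⟩
  refine ⟨(r / r') • y, hG.smul_mem hy (by positivity) ((div_le_one hr').2 hrr'), ?_⟩
  show r' • ((r / r') • y) = r • y
  rw [smul_smul, mul_div_cancel₀ _ hr'.ne']

theorem StarConvex.setIntegral_finrank_sub_sq_norm_mul_exp_nonneg {G : Set E}
    (hG : StarConvex ℝ 0 G) :
    0 ≤ ∫ y in G, (finrank ℝ E - ‖y‖ ^ 2) * exp (-‖y‖ ^ 2 / 2) := by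
  have hacc : AccPt (1 : ℝ) (𝓟 (Ioi 0)) :=
    accPt_principal_iff_nhdsWithin.2 <| (inferInstance : (𝓝[>] (1 : ℝ)).NeBot).mono
      (nhdsWithin_mono _ fun r (hr : 1 < r) => ⟨show (0 : ℝ) < r from one_pos.trans hr, hr.ne'⟩)
  refine (hasDerivAt_setIntegral_pow_mul_exp_neg_sq_mul_sq_norm G).hasDerivWithinAt
    |>.nonneg_of_monotoneOn hacc ?_
  refine (hG.monotoneOn_setIntegral_smul (f := fun v => exp (-‖v‖ ^ 2 / 2)) ?_
    fun v => (exp_pos _).le).congr fun r hr => ?_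
  · exact (integrable_exp_neg_mul_sq_norm one_half_pos).congr (.of_forall fun y => by ring_nf)
  · exact (setIntegral_pow_mul_exp_neg_sq_mul_sq_norm_eq_setIntegral_smul hr G).symm

end

lemma integral_gauss {n : ℕ} (f : EuclideanSpace ℝ (Fin n) → ℝ) :
    ∫ y, f y ∂gauss n = ∫ y, (2 * π) ^ (-(n : ℝ) / 2) * exp (-‖y‖ ^ 2 / 2) * f y := by
  rw [gauss, integral_withDensity_eq_integral_toReal_smul (by fun_prop)
    (.of_forall fun _ => ENNReal.ofReal_lt_top)]
  congr 1 with y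
  rw [ENNReal.toReal_ofReal (by positivity), smul_eq_mul]

lemma EuclideanSpace.sum_one_sub_sq {n : ℕ} (y : EuclideanSpace ℝ (Fin n)) :
    ∑ ℓ, (1 - y ℓ ^ 2) = n - ‖y‖ ^ 2 := by
  simp [Finset.sum_sub_distrib, EuclideanSpace.real_norm_sq_eq]

theorem integral_sum_one_sub_sq_mul_indicator_sub_nonneg {n : ℕ}
    {G H : Set (EuclideanSpace ℝ (Fin n))} (hGm : MeasurableSet G) (hHm : MeasurableSet H)
    (hG : StarConvex ℝ 0 G) (hH : ∀ y ∈ H, (n : ℝ) < ‖y‖ ^ 2) :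
    0 ≤ ∫ y, (∑ ℓ, (1 - y ℓ ^ 2)) * (G.indicator 1 y - H.indicator 1 y) ∂gauss n := by
  set φ : EuclideanSpace ℝ (Fin n) → ℝ := fun y => (n - ‖y‖ ^ 2) * exp (-‖y‖ ^ 2 / 2)
  have hφ : Integrable φ := integrable_const_sub_sq_norm_mul_exp _
  have hφG : 0 ≤ ∫ y in G, φ y := by
    simpa [φ, finrank_euclideanSpace_fin] using hG.setIntegral_finrank_sub_sq_norm_mul_exp_nonneg
  have hφH : ∫ y in H, φ y ≤ 0 := setIntegral_nonpos hHm fun y hy =>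
    mul_nonpos_of_nonpos_of_nonneg (by linarith [hH y hy]) (exp_pos _).le
  have hrw : ∀ y, (2 * π) ^ (-(n : ℝ) / 2) * exp (-‖y‖ ^ 2 / 2)
      * ((∑ ℓ, (1 - y ℓ ^ 2)) * (G.indicator 1 y - H.indicator 1 y))
      = (2 * π) ^ (-(n : ℝ) / 2) * (G.indicator φ y - H.indicator φ y) := by
    intro y
    classical
    simp only [EuclideanSpace.sum_one_sub_sq, Set.indicator_apply, Pi.one_apply]
    split_ifs <;> ring
  rw [integral_gauss]
  simp_rw [hrw]
  rw [integral_const_mul, integral_sub (hφ.indicator hGm) (hφ.indicator hHm),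
    integral_indicator hGm, integral_indicator hHm]
  exact mul_nonneg (by positivity) (by linarith)

namespace IsSimplicialConicalPartition

variable {n k : ℕ} {A : Fin k → Set (EuclideanSpace ℝ (Fin n))}

lemma isClosed (h : IsSimplicialConicalPartition n k A) (p : Fin k) : IsClosed (A p) := by
  obtain ⟨z, -, hA⟩ := h
  rw [hA p, ofPred_forall]
  exact isClosed_iInter fun q => isClosed_le (by fun_prop) (by fun_prop)

lemma convex (h : IsSimplicialConicalPartition n k A) (p : Fin k) : Convex ℝ (A p) := by
  obtain ⟨z, -, hA⟩ := h
  rw [hA p]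
  intro x hx y hy a b ha hb _ q
  simp only [mem_ofPred_eq, inner_add_left, real_inner_smul_left] at hx hy ⊢
  nlinarith [mul_le_mul_of_nonneg_left (hx q) ha, mul_le_mul_of_nonneg_left (hy q) hb]

lemma smul_mem (h : IsSimplicialConicalPartition n k A) {p : Fin k} {x} (hx : x ∈ A p)
    {t : ℝ} (ht : 0 ≤ t) : t • x ∈ A p := by
  obtain ⟨z, -, hA⟩ := h
  rw [hA p] at hx ⊢
  intro q
  simp only [real_inner_smul_left]
  exact mul_le_mul_of_nonneg_left (hx q) ht

end IsSimplicialConicalPartition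

lemma isLinearMap_proj2 (n : ℕ) (h : 2 ≤ n) : IsLinearMap ℝ (proj2 n h) :=
  ⟨fun _ _ => rfl, fun _ _ => rfl⟩

lemma continuous_proj2 (n : ℕ) (h : 2 ≤ n) : Continuous (proj2 n h) :=
  (IsLinearMap.mk' _ (isLinearMap_proj2 n h)).continuous_of_finiteDimensional

lemma image_reflFirst_subset {n : ℕ} (h : 2 ≤ n) {K : Set (EuclideanSpace ℝ (Fin n))}
    (hK : K ⊆ {x | 0 ≤ x (Fin.castLE h 0)}) :
    reflFirst n h '' K ⊆ {x | x (Fin.castLE h 0) ≤ 0} := by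
  rintro _ ⟨u, hu, rfl⟩
  simpa [reflFirst] using hK hu

lemma lt_sq_norm_of_smul_add_smul_apply_nonpos {ι : Type*} [Fintype ι] {a ρ s : ℝ}
    (ha : 0 ≤ a) (hρ : 0 < ρ) (hs : 0 < s) {x y : EuclideanSpace ℝ ι} {k : ι}
    (hx : √a * s / ρ < x k) (hxy : (ρ • x + s • y) k ≤ 0) : a < ‖y‖ ^ 2 := by
  rw [div_lt_iff₀ hρ] at hx
  simp only [PiLp.add_apply, PiLp.smul_apply, smul_eq_mul] at hxy
  have hyk : √a < ‖y k‖ := by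
    rw [Real.norm_eq_abs, abs_of_neg (by nlinarith [sqrt_nonneg a])]
    nlinarith
  calc a = √a ^ 2 := (sq_sqrt ha).symm
    _ < ‖y‖ ^ 2 := by gcongr; exact hyk.trans_le (PiLp.norm_apply_le y k)

lemma Convex.starConvex_preimage_add_smul {E : Type*} [AddCommGroup E] [Module ℝ E] {K : Set E}
    (hK : Convex ℝ K) {a : E} (ha : a ∈ K) (s : ℝ) :
    StarConvex ℝ 0 ((fun y => a + s • y) ⁻¹' K) := by
  intro y hy u v hu hv huv
  show a + s • (u • (0 : E) + v • y) ∈ K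
  convert hK ha hy hu hv huv using 1
  calc a + s • (u • (0 : E) + v • y) = (u + v) • a + v • (s • y) := by rw [huv]; module
    _ = u • a + v • (a + s • y) := by module

theorem lemma4_iv_general (n : ℕ) (hn : 2 ≤ n) (ρ : ℝ) (hρ : ρ ∈ Set.Ioo (0 : ℝ) 1)
    (C : Fin 3 → Set (EuclideanSpace ℝ (Fin 2)))
    (hC : IsSimplicialConicalPartition 2 3 C)
    (B : Fin 3 → Set (EuclideanSpace ℝ (Fin n)))
    (hB : ∀ p, B p = proj2 n hn ⁻¹' C p)
    (i j : Fin 3)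
    (hBi : B i ⊆ {x | 0 ≤ x (Fin.castLE hn 0)})
    (hrefl : B j = reflFirst n hn '' B i) :
    ∀ x ∈ B i, Real.sqrt n * Real.sqrt (1 - ρ ^ 2) / ρ < x (Fin.castLE hn 0) →
      0 ≤ ∫ y, (∑ ℓ, (1 - (y ℓ) ^ 2)) *
          ((B i).indicator 1 (ρ • x + Real.sqrt (1 - ρ ^ 2) • y)
            - (B j).indicator 1 (ρ • x + Real.sqrt (1 - ρ ^ 2) • y)) ∂(gauss n) := by
  intro x hx hx₁
  obtain ⟨hρ₀, hρ₁⟩ := hρ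
  have hs : 0 < √(1 - ρ ^ 2) := sqrt_pos.2 (by nlinarith)
  have hBm (p : Fin 3) : MeasurableSet (B p) := by
    rw [hB p]
    exact ((hC.isClosed p).preimage (continuous_proj2 n hn)).measurableSet
  have hBc : Convex ℝ (B i) := by
    rw [hB i]
    exact (hC.convex i).is_linear_preimage (isLinearMap_proj2 n hn)
  have hρx : ρ • x ∈ B i := by
    rw [hB i] at hx ⊢
    simpa only [mem_preimage, (isLinearMap_proj2 n hn).map_smul] using hC.smul_mem hx hρ₀.le
  refine integral_sum_one_sub_sq_mul_indicator_sub_nonneg ((hBm i).preimage (by fun_prop))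
    ((hBm j).preimage (by fun_prop)) (hBc.starConvex_preimage_add_smul hρx _) fun y hy => ?_
  refine lt_sq_norm_of_smul_add_smul_apply_nonpos n.cast_nonneg hρ₀ hs hx₁ ?_
  have hz : ρ • x + √(1 - ρ ^ 2) • y ∈ reflFirst n hn '' B i := hrefl ▸ hy
  exact image_reflFirst_subset hn hBi hz

theorem lemma4_iv (n : ℕ) (hn : 2 ≤ n) (ρ : ℝ) (hρ : ρ ∈ Set.Ioo (0 : ℝ) 1)
    (C : Fin 3 → Set (EuclideanSpace ℝ (Fin 2)))
    (hC : IsSimplicialConicalPartition 2 3 C)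
    (B : Fin 3 → Set (EuclideanSpace ℝ (Fin n)))
    (hB : ∀ p, B p = proj2 n hn ⁻¹' C p)
    (i j : Fin 3) (hij : i ≠ j)
    (hBij : B i ∩ B j ⊆ {x | x (Fin.castLE hn 0) = 0})
    (hBi : B i ⊆ {x | 0 ≤ x (Fin.castLE hn 0)})
    (hrefl : B j = reflFirst n hn '' B i) :
    ∀ x ∈ B i, Real.sqrt n * Real.sqrt (1 - ρ ^ 2) / ρ < x (Fin.castLE hn 0) →
      0 ≤ ∫ y, (∑ ℓ, (1 - (y ℓ) ^ 2)) *
          ((B i).indicator 1 (ρ • x + Real.sqrt (1 - ρ ^ 2) • y)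
            - (B j).indicator 1 (ρ • x + Real.sqrt (1 - ρ ^ 2) • y)) ∂(gauss n) :=
  lemma4_iv_general n hn ρ hρ C hC B hB i j hBi hrefl
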